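/- arXiv:2106.02336 — 8 statements merged into one kernel-verified Lean document; each statement's English description precedes it below -/
import Mathlib

section
/- Let U, V : ℝ × ℝ → Matrix (Fin 2) (Fin 2) ℂ be continuously differentiable matrix-valued functions satisfying the zero-curvature equation ∂ₜU(x,t) − ∂ₓV(x,t) + U(x,t)·V(x,t) − V(x,t)·U(x,t) = 0 for all (x,t). Fix y ∈ ℝ, and let T : ℝ × ℝ → Matrix (Fin 2) (Fin 2) ℂ be twice continuously differentiable with ∂ₓT(x,t) = U(x,t)·T(x,t) for all (x,t) and T(y,t) = 1 (the identity matrix) for all t. Then ∂ₜT(x,t) = V(x,t)·T(x,t) − T(x,t)·V(y,t) for all (x,t) ∈ ℝ × ℝ. -/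
open Matrix

noncomputable section

/-- Entrywise partial derivative of a matrix-valued function in the space variable. -/
def matPX (M : ℝ × ℝ → Matrix (Fin 2) (Fin 2) ℂ) (p : ℝ × ℝ) :
    Matrix (Fin 2) (Fin 2) ℂ :=
  Matrix.of fun i j => deriv (fun x => M (x, p.2) i j) p.1

/-- Entrywise partial derivative of a matrix-valued function in the time variable. -/
def matPT (M : ℝ × ℝ → Matrix (Fin 2) (Fin 2) ℂ) (p : ℝ × ℝ) :
    Matrix (Fin 2) (Fin 2) ℂ :=
  Matrix.of fun i j => deriv (fun t => M (p.1, t) i j) p.2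


/-- derivative of the x-slice of a two-variable function. -/
private lemma hasDerivAt_slice_x {f : ℝ × ℝ → ℂ} {x t : ℝ}
    (hf : DifferentiableAt ℝ f (x, t)) :
    HasDerivAt (fun x' => f (x', t)) (fderiv ℝ f (x, t) (1, 0)) x :=
  hf.hasFDerivAt.comp_hasDerivAt x ((hasDerivAt_id x).prodMk (hasDerivAt_const x t))

private lemma hasDerivAt_slice_t {f : ℝ × ℝ → ℂ} {x t : ℝ}
    (hf : DifferentiableAt ℝ f (x, t)) :
    HasDerivAt (fun t' => f (x, t')) (fderiv ℝ f (x, t) (0, 1)) t :=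
  hf.hasFDerivAt.comp_hasDerivAt t ((hasDerivAt_const t x).prodMk (hasDerivAt_id t))

/-- Clairaut/Schwarz: for a `C²` function, the x-derivative of the t-partial exists and
equals the t-derivative of the x-partial. -/
private lemma hasDerivAt_mixed {f : ℝ × ℝ → ℂ} (hf : ContDiff ℝ 2 f) (x t : ℝ) :
    HasDerivAt (fun x' => deriv (fun s => f (x', s)) t)
      (deriv (fun s => deriv (fun x' => f (x', s)) x) t) x := by
  have hdf : Differentiable ℝ f := hf.differentiable two_ne_zero
  have hF : ContDiff ℝ 1 (fderiv ℝ f) := hf.fderiv_right (le_refl 2)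
  have hft : ContDiff ℝ 1 (fun p => fderiv ℝ f p ((0 : ℝ), (1 : ℝ))) :=
    hF.clm_apply contDiff_const
  have hfx : ContDiff ℝ 1 (fun p => fderiv ℝ f p ((1 : ℝ), (0 : ℝ))) :=
    hF.clm_apply contDiff_const
  have e1 : (fun x' => deriv (fun s => f (x', s)) t)
      = fun x' => fderiv ℝ f (x', t) (0, 1) := by
    funext x'
    exact (hasDerivAt_slice_t (hdf _)).deriv
  have e3 : (fun s => deriv (fun x' => f (x', s)) x)
      = fun s => fderiv ℝ f (x, s) (1, 0) := by
    funext s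
    exact (hasDerivAt_slice_x (hdf _)).deriv
  rw [e1, e3]
  have h1 : HasDerivAt (fun x' => fderiv ℝ f (x', t) (0, 1))
      (fderiv ℝ (fun p => fderiv ℝ f p ((0 : ℝ), (1 : ℝ))) (x, t) (1, 0)) x :=
    hasDerivAt_slice_x ((hft.differentiable one_ne_zero) _)
  have h2 : deriv (fun s => fderiv ℝ f (x, s) (1, 0)) t
      = fderiv ℝ (fun p => fderiv ℝ f p ((1 : ℝ), (0 : ℝ))) (x, t) (0, 1) :=
    (hasDerivAt_slice_t ((hfx.differentiable one_ne_zero) _)).deriv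
  have hFd : DifferentiableAt ℝ (fderiv ℝ f) (x, t) := (hF.differentiable one_ne_zero) _
  have key : fderiv ℝ (fun p => fderiv ℝ f p ((0 : ℝ), (1 : ℝ))) (x, t) (1, 0)
      = fderiv ℝ (fun p => fderiv ℝ f p ((1 : ℝ), (0 : ℝ))) (x, t) (0, 1) := by
    rw [fderiv_clm_apply hFd (differentiableAt_const _),
        fderiv_clm_apply hFd (differentiableAt_const _)]
    simp only [fderiv_const, fderiv_const_apply, ContinuousLinearMap.zero_apply, Pi.zero_apply, ContinuousLinearMap.comp_zero, zero_add,
      ContinuousLinearMap.add_apply, ContinuousLinearMap.flip_apply]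
    exact second_derivative_symmetric (fun q => (hdf q).hasFDerivAt) hFd.hasFDerivAt _ _
  rw [h2, ← key]
  exact h1

/-- entrywise product rule for matrix products. -/
private lemma hasDerivAt_matmul {A B : ℝ → Matrix (Fin 2) (Fin 2) ℂ}
    {A' B' : Matrix (Fin 2) (Fin 2) ℂ} {x : ℝ}
    (hA : ∀ i j, HasDerivAt (fun s => A s i j) (A' i j) x)
    (hB : ∀ i j, HasDerivAt (fun s => B s i j) (B' i j) x) (i j : Fin 2) :
    HasDerivAt (fun s => (A s * B s) i j) ((A' * B x + A x * B') i j) x := by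
  have h : HasDerivAt (fun s => ∑ k, A s i k * B s k j)
      (∑ k : Fin 2, (A' i k * B x k j + A x i k * B' k j)) x :=
    HasDerivAt.fun_sum (fun k _ => (hA i k).mul (hB k j))
  have e1 : (fun s => (A s * B s) i j) = fun s => ∑ k, A s i k * B s k j := by
    funext s; exact Matrix.mul_apply
  have e2 : (A' * B x + A x * B') i j
      = ∑ k : Fin 2, (A' i k * B x k j + A x i k * B' k j) := by
    simp [Matrix.add_apply, Matrix.mul_apply, Finset.sum_add_distrib]
  rw [e1, e2]
  exact h


/-- If `U, V` satisfy the zero-curvature equation and `T` is the transition matrix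
(the fundamental solution of `∂ₓT = U T`, normalized to the identity at `x = y`), then
`∂ₜT(x,t) = V(x,t) T(x,t) − T(x,t) V(y,t)`. -/
theorem transition_matrix_time_evolution
    (U V : ℝ × ℝ → Matrix (Fin 2) (Fin 2) ℂ)
    (hU : ∀ i j, ContDiff ℝ 1 fun p => U p i j)
    (hV : ∀ i j, ContDiff ℝ 1 fun p => V p i j)
    (hzc : ∀ p : ℝ × ℝ, matPT U p - matPX V p + U p * V p - V p * U p = 0)
    (y : ℝ) (T : ℝ × ℝ → Matrix (Fin 2) (Fin 2) ℂ)
    (hT : ∀ i j, ContDiff ℝ 2 fun p => T p i j)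
    (hTx : ∀ p : ℝ × ℝ, matPX T p = U p * T p)
    (hTy : ∀ t : ℝ, T (y, t) = 1) :
    ∀ p : ℝ × ℝ, matPT T p = V p * T p - T p * V (y, p.2) := by
  have hTdiff : ∀ i j, Differentiable ℝ (fun p => T p i j) :=
    fun i j => (hT i j).differentiable two_ne_zero
  have hUdiff : ∀ i j, Differentiable ℝ (fun p => U p i j) :=
    fun i j => (hU i j).differentiable one_ne_zero
  have hVdiff : ∀ i j, Differentiable ℝ (fun p => V p i j) :=
    fun i j => (hV i j).differentiable one_ne_zero
  -- slice derivatives with values given by matPX / matPT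
  have hUslicet : ∀ (x t : ℝ) (i j : Fin 2),
      HasDerivAt (fun s => U (x, s) i j) (matPT U (x, t) i j) t := fun x t i j =>
    (hasDerivAt_slice_t ((hUdiff i j) (x, t))).differentiableAt.hasDerivAt
  have hTslicet : ∀ (x t : ℝ) (i j : Fin 2),
      HasDerivAt (fun s => T (x, s) i j) (matPT T (x, t) i j) t := fun x t i j =>
    (hasDerivAt_slice_t ((hTdiff i j) (x, t))).differentiableAt.hasDerivAt
  have hVslicex : ∀ (x t : ℝ) (i j : Fin 2),
      HasDerivAt (fun x' => V (x', t) i j) (matPX V (x, t) i j) x := fun x t i j =>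
    (hasDerivAt_slice_x ((hVdiff i j) (x, t))).differentiableAt.hasDerivAt
  have hTslicex : ∀ (x t : ℝ) (i j : Fin 2),
      HasDerivAt (fun x' => T (x', t) i j) ((U (x, t) * T (x, t)) i j) x := by
    intro x t i j
    have h : HasDerivAt (fun x' => T (x', t) i j) (matPX T (x, t) i j) x :=
      (hasDerivAt_slice_x ((hTdiff i j) (x, t))).differentiableAt.hasDerivAt
    have : matPX T (x, t) i j = (U (x, t) * T (x, t)) i j := by rw [hTx]
    rw [← this]
    exact h
  -- x-derivative of matPT T, via symmetry of second derivatives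
  have keyT : ∀ (x t : ℝ) (i j : Fin 2),
      HasDerivAt (fun x' => matPT T (x', t) i j)
        ((matPT U (x, t) * T (x, t) + U (x, t) * matPT T (x, t)) i j) x := by
    intro x t i j
    have h0 := hasDerivAt_mixed (hT i j) x t
    have e : (fun s => deriv (fun x' => T (x', s) i j) x)
        = fun s => (U (x, s) * T (x, s)) i j := by
      funext s
      have : deriv (fun x' => T (x', s) i j) x = matPX T (x, s) i j := rfl
      rw [this, hTx]
    rw [e] at h0
    have h1 : HasDerivAt (fun s => (U (x, s) * T (x, s)) i j)
        ((matPT U (x, t) * T (x, t) + U (x, t) * matPT T (x, t)) i j) t :=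
      hasDerivAt_matmul (fun i j => hUslicet x t i j) (fun i j => hTslicet x t i j) i j
    rw [h1.deriv] at h0
    exact h0
  intro p
  obtain ⟨x₀, t₀⟩ := p
  -- the solution candidate, as a pi-type valued function of x
  set Wm : ℝ → Matrix (Fin 2) (Fin 2) ℂ := fun x =>
    matPT T (x, t₀) - V (x, t₀) * T (x, t₀) + T (x, t₀) * V (y, t₀) with hWm
  have hWentry : ∀ (x : ℝ) (i j : Fin 2),
      HasDerivAt (fun x' => Wm x' i j) ((U (x, t₀) * Wm x) i j) x := by
    intro x i j
    have hA := keyT x t₀ i j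
    have hB : HasDerivAt (fun x' => (V (x', t₀) * T (x', t₀)) i j)
        ((matPX V (x, t₀) * T (x, t₀) + V (x, t₀) * (U (x, t₀) * T (x, t₀))) i j) x :=
      hasDerivAt_matmul (fun i j => hVslicex x t₀ i j) (fun i j => hTslicex x t₀ i j) i j
    have hC : HasDerivAt (fun x' => (T (x', t₀) * V (y, t₀)) i j)
        (((U (x, t₀) * T (x, t₀)) * V (y, t₀) + T (x, t₀) * (0 : Matrix (Fin 2) (Fin 2) ℂ)) i j) x :=
      hasDerivAt_matmul (fun i j => hTslicex x t₀ i j)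
        (fun i j => hasDerivAt_const x (V (y, t₀) i j)) i j
    have hD := (hA.fun_sub hB).fun_add hC
    have hval : matPT U (x, t₀) * T (x, t₀) + U (x, t₀) * matPT T (x, t₀)
        - (matPX V (x, t₀) * T (x, t₀) + V (x, t₀) * (U (x, t₀) * T (x, t₀)))
        + ((U (x, t₀) * T (x, t₀)) * V (y, t₀) + T (x, t₀) * (0 : Matrix (Fin 2) (Fin 2) ℂ))
        = U (x, t₀) * Wm x := by
      rw [hWm]
      have h2 : (matPT U (x, t₀) - matPX V (x, t₀) + U (x, t₀) * V (x, t₀)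
          - V (x, t₀) * U (x, t₀)) * T (x, t₀) = 0 := by
        rw [hzc (x, t₀), zero_mul]
      calc matPT U (x, t₀) * T (x, t₀) + U (x, t₀) * matPT T (x, t₀)
            - (matPX V (x, t₀) * T (x, t₀) + V (x, t₀) * (U (x, t₀) * T (x, t₀)))
            + ((U (x, t₀) * T (x, t₀)) * V (y, t₀) + T (x, t₀) * (0 : Matrix (Fin 2) (Fin 2) ℂ))
          = U (x, t₀) * (matPT T (x, t₀) - V (x, t₀) * T (x, t₀)
              + T (x, t₀) * V (y, t₀))
            + (matPT U (x, t₀) - matPX V (x, t₀) + U (x, t₀) * V (x, t₀)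
              - V (x, t₀) * U (x, t₀)) * T (x, t₀) := by noncomm_ring
        _ = U (x, t₀) * (matPT T (x, t₀) - V (x, t₀) * T (x, t₀)
              + T (x, t₀) * V (y, t₀)) := by rw [h2, add_zero]
    have efun : (fun x' => matPT T (x', t₀) i j - (V (x', t₀) * T (x', t₀)) i j
        + (T (x', t₀) * V (y, t₀)) i j) = fun x' => Wm x' i j := by
      funext x'
      simp [hWm, Matrix.sub_apply, Matrix.add_apply]
    rw [efun] at hD
    have eval' : matPT U (x, t₀) * T (x, t₀) + U (x, t₀) * matPT T (x, t₀)
        - (matPX V (x, t₀) * T (x, t₀) + V (x, t₀) * (U (x, t₀) * T (x, t₀)))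
        + ((U (x, t₀) * T (x, t₀)) * V (y, t₀) + T (x, t₀) * (0 : Matrix (Fin 2) (Fin 2) ℂ)) = U (x, t₀) * Wm x := hval
    have : (matPT U (x, t₀) * T (x, t₀) + U (x, t₀) * matPT T (x, t₀)) i j
        - (matPX V (x, t₀) * T (x, t₀) + V (x, t₀) * (U (x, t₀) * T (x, t₀))) i j
        + ((U (x, t₀) * T (x, t₀)) * V (y, t₀) + T (x, t₀) * (0 : Matrix (Fin 2) (Fin 2) ℂ)) i j
        = (U (x, t₀) * Wm x) i j := by
      rw [← eval']
      simp [Matrix.sub_apply, Matrix.add_apply]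
    rw [this] at hD
    exact hD
  -- set up the ODE uniqueness argument on E = Fin 2 → Fin 2 → ℂ
  set a : ℝ := min y x₀ - 1 with ha
  set b : ℝ := max y x₀ + 1 with hb
  have hab : a ≤ b := by
    have := min_le_max (a := y) (b := x₀)
    simp only [ha, hb]; linarith
  set proj : ℝ → ℝ := fun s => max a (min s b) with hproj
  have hprojmem : ∀ s, proj s ∈ Set.Icc a b := by
    intro s
    constructor
    · exact le_max_left _ _
    · simp only [hproj, max_le_iff]
      exact ⟨hab, min_le_right _ _⟩
  have hprojid : ∀ s ∈ Set.Ioo a b, proj s = s := by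
    intro s hs
    simp only [hproj]
    rw [min_eq_left hs.2.le, max_eq_right hs.1.le]
  -- uniform bound on U on the interval
  obtain ⟨C, hC⟩ := (isCompact_Icc (a := a) (b := b)).exists_bound_of_continuousOn
    (f := fun s => (fun q => U (s, t₀) q.1 q.2 : Fin 2 × Fin 2 → ℂ))
    (by
      apply Continuous.continuousOn
      refine continuous_pi fun q => ?_
      exact (hU q.1 q.2).continuous.comp (continuous_id.prodMk continuous_const))
  have hCbound : ∀ s (i k : Fin 2), ‖U (proj s, t₀) i k‖ ≤ C := by
    intro s i k
    calc ‖U (proj s, t₀) i k‖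
        = ‖(fun q => U (proj s, t₀) q.1 q.2 : Fin 2 × Fin 2 → ℂ) (i, k)‖ := rfl
      _ ≤ ‖(fun q => U (proj s, t₀) q.1 q.2 : Fin 2 × Fin 2 → ℂ)‖ := by
          exact norm_le_pi_norm (fun q => U (proj s, t₀) q.1 q.2 : Fin 2 × Fin 2 → ℂ) (i, k)
      _ ≤ C := hC _ (hprojmem s)
  have hC0 : 0 ≤ C := le_trans (norm_nonneg _) (hC a ⟨le_rfl, hab⟩)
  set vf : ℝ → (Fin 2 → Fin 2 → ℂ) → (Fin 2 → Fin 2 → ℂ) :=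
    fun s M i j => ∑ k, U (proj s, t₀) i k * M k j with hvf
  set K : NNReal := (2 * C).toNNReal with hK
  have hlip : ∀ s, LipschitzOnWith K (vf s) Set.univ := by
    intro s
    apply LipschitzOnWith.of_dist_le_mul
    intro M _ N _
    rw [dist_eq_norm, dist_eq_norm]
    have h1 : ‖vf s M - vf s N‖ ≤ 2 * C * ‖M - N‖ := by
      apply pi_norm_le_iff_of_nonneg (by positivity) |>.2
      intro i
      apply pi_norm_le_iff_of_nonneg (by positivity) |>.2
      intro j
      have : (vf s M - vf s N) i j = ∑ k, U (proj s, t₀) i k * (M k j - N k j) := by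
        simp [hvf, Finset.sum_sub_distrib, mul_sub]
      rw [this]
      calc ‖∑ k, U (proj s, t₀) i k * (M k j - N k j)‖
          ≤ ∑ k, ‖U (proj s, t₀) i k * (M k j - N k j)‖ := norm_sum_le _ _
        _ ≤ ∑ _k : Fin 2, C * ‖M - N‖ := by
            apply Finset.sum_le_sum
            intro k _
            rw [norm_mul]
            have hMN : ‖M k j - N k j‖ ≤ ‖M - N‖ :=
              le_trans (norm_le_pi_norm (M k - N k) j) (norm_le_pi_norm (M - N) k)
            exact mul_le_mul (hCbound s i k) hMN (norm_nonneg _) hC0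
        _ = 2 * C * ‖M - N‖ := by simp [Finset.sum_const]; ring
    calc ‖vf s M - vf s N‖ ≤ 2 * C * ‖M - N‖ := h1
      _ = (K : ℝ) * ‖M - N‖ := by
          rw [hK, Real.coe_toNNReal _ (by positivity)]
  -- W as a pi-valued function
  set W : ℝ → (Fin 2 → Fin 2 → ℂ) := fun x i j => Wm x i j with hW
  have hWderiv : ∀ s ∈ Set.Ioo a b, HasDerivAt W (vf s (W s)) s := by
    intro s hs
    have h : HasDerivAt W (fun i j => (U (s, t₀) * Wm s) i j) s := by
      apply hasDerivAt_pi.2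
      intro i
      apply hasDerivAt_pi.2
      intro j
      exact hWentry s i j
    have : (fun i j => (U (s, t₀) * Wm s) i j) = vf s (W s) := by
      funext i j
      simp [hvf, hW, Matrix.mul_apply, hprojid s hs]
    rwa [this] at h
  have hWcont : ContinuousOn W (Set.Icc a b) := by
    apply Continuous.continuousOn
    refine continuous_pi fun i => continuous_pi fun j => ?_
    exact continuous_iff_continuousAt.2 fun x => (hWentry x i j).continuousAt
  have hW0 : W y = 0 := by
    funext i j
    show (matPT T (y, t₀) - V (y, t₀) * T (y, t₀) + T (y, t₀) * V (y, t₀)) i j = 0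
    rw [Matrix.add_apply, Matrix.sub_apply]
    have h1 : matPT T (y, t₀) i j = 0 := by
      have : (fun t => T ((y, t₀).1, t) i j) = fun _ => (1 : Matrix (Fin 2) (Fin 2) ℂ) i j := by
        funext s; rw [show ((y, t₀).1 : ℝ) = y from rfl, hTy]
      show deriv (fun t => T ((y, t₀).1, t) i j) t₀ = 0
      rw [this, deriv_const]
    rw [h1, hTy]
    simp [Matrix.mul_apply, Matrix.one_apply]
  have hzero : ∀ s ∈ Set.Ioo a b, HasDerivAt (fun _ : ℝ => (0 : Fin 2 → Fin 2 → ℂ))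
      (vf s ((fun _ : ℝ => (0 : Fin 2 → Fin 2 → ℂ)) s)) s := by
    intro s _
    have : vf s 0 = 0 := by funext i j; simp [hvf]
    rw [this]
    exact hasDerivAt_const s 0
  have hyIoo : y ∈ Set.Ioo a b := by
    constructor
    · have : min y x₀ ≤ y := min_le_left _ _
      simp only [ha]; linarith
    · have : y ≤ max y x₀ := le_max_left _ _
      simp only [hb]; linarith
  have huniq := ODE_solution_unique_of_mem_Icc (v := vf) (s := fun _ => Set.univ)
    (K := K) (fun s _ => hlip s) hyIoo hWcont
    (fun s hs => hWderiv s hs) (fun _ _ => Set.mem_univ _)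
    (continuous_const.continuousOn)
    hzero (fun _ _ => Set.mem_univ _) (by rw [hW0])
  have hx₀ : x₀ ∈ Set.Icc a b := by
    constructor
    · have : min y x₀ ≤ x₀ := min_le_right _ _
      simp only [ha]; linarith
    · have : x₀ ≤ max y x₀ := le_max_right _ _
      simp only [hb]; linarith
  have hWx₀ : W x₀ = 0 := huniq hx₀
  -- conclude
  ext i j
  have h : (matPT T (x₀, t₀) - V (x₀, t₀) * T (x₀, t₀) + T (x₀, t₀) * V (y, t₀)) i j
      = 0 := congrFun (congrFun hWx₀ i) j
  rw [Matrix.add_apply, Matrix.sub_apply] at h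
  simp only [Matrix.sub_apply]
  linear_combination h
end
end

section
/- Fix λ ∈ ℂ and let V_L⁺, V_L⁻, V_0⁺, V_0⁻ : ℝ → Matrix (Fin 2) (Fin 2) ℂ be continuous (playing the roles of V(L,t;λ), V(L,t;−λ), V(0,t;λ), V(0,t;−λ)). Let T⁺, T⁻, K⁺, K⁻ : ℝ → Matrix (Fin 2) (Fin 2) ℂ be differentiable, with T⁻(t) invertible for all t, satisfying: (T⁺)'(t) = V_L⁺(t)·T⁺(t) − T⁺(t)·V_0⁺(t); (T⁻)'(t) = V_L⁻(t)·T⁻(t) − T⁻(t)·V_0⁻(t); (K⁺)'(t) = V_L⁻(t)·K⁺(t) − K⁺(t)·V_L⁺(t); and (K⁻)'(t) = V_0⁺(t)·K⁻(t) − K⁻(t)·V_0⁻(t). Define the double-row monodromy matrix Γ(t) = T⁺(t)·K⁻(t)·(T⁻(t))⁻¹·K⁺(t). Then Γ satisfies the Lax equation Γ'(t) = V_L⁺(t)·Γ(t) − Γ(t)·V_L⁺(t) for all t ∈ ℝ. -/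
open Matrix

noncomputable section

/-- Entrywise derivative of a matrix-valued function of one real variable. -/
def matD (M : ℝ → Matrix (Fin 2) (Fin 2) ℂ) (t : ℝ) : Matrix (Fin 2) (Fin 2) ℂ :=
  Matrix.of fun i j => deriv (fun s => M s i j) t

lemma diff_mulM {A B : ℝ → Matrix (Fin 2) (Fin 2) ℂ}
    (hA : ∀ i j, Differentiable ℝ fun t => A t i j)
    (hB : ∀ i j, Differentiable ℝ fun t => B t i j) :
    ∀ i j, Differentiable ℝ fun t => (A t * B t) i j := by
  intro i j
  simp only [Matrix.mul_apply]
  exact Differentiable.fun_sum fun k _ => (hA i k).mul (hB k j)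

lemma matD_mul {A B : ℝ → Matrix (Fin 2) (Fin 2) ℂ}
    (hA : ∀ i j, Differentiable ℝ fun t => A t i j)
    (hB : ∀ i j, Differentiable ℝ fun t => B t i j) (t : ℝ) :
    matD (fun s => A s * B s) t = matD A t * B t + A t * matD B t := by
  ext i j
  simp only [matD, Matrix.of_apply, Matrix.add_apply, Matrix.mul_apply]
  have h : HasDerivAt (fun s => ∑ k, A s i k * B s k j)
      (∑ k, (deriv (fun s => A s i k) t * B t k j + A t i k * deriv (fun s => B s k j) t)) t :=
    HasDerivAt.fun_sum fun k _ =>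
      ((hA i k t).hasDerivAt.mul (hB k j t).hasDerivAt)
  rw [h.deriv, Finset.sum_add_distrib]

lemma diff_invM {Tm : ℝ → Matrix (Fin 2) (Fin 2) ℂ}
    (hTmdiff : ∀ i j, Differentiable ℝ fun t => Tm t i j)
    (hTminv : ∀ t, IsUnit (Tm t)) :
    ∀ i j, Differentiable ℝ fun t => (Tm t)⁻¹ i j := by
  have hdet : Differentiable ℝ fun t => (Tm t).det := by
    simp only [Matrix.det_fin_two]
    exact ((hTmdiff 0 0).mul (hTmdiff 1 1)).sub ((hTmdiff 0 1).mul (hTmdiff 1 0))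
  have hdetne : ∀ t, (Tm t).det ≠ 0 := fun t =>
    (((Matrix.isUnit_iff_isUnit_det _).mp (hTminv t))).ne_zero
  intro i j
  have key : (fun t => (Tm t)⁻¹ i j) = fun t => ((Tm t).det)⁻¹ * (Tm t).adjugate i j := by
    funext t
    rw [Matrix.inv_def]
    simp [Ring.inverse_eq_inv]
  rw [key]
  refine (hdet.inv hdetne).mul ?_
  fin_cases i <;> fin_cases j <;>
    simp only [Matrix.adjugate_fin_two, Matrix.cons_val', Matrix.cons_val_zero,
      Matrix.cons_val_one, Matrix.head_cons, Matrix.empty_val', Matrix.cons_val_fin_one,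
      Matrix.head_fin_const] <;>
    first
      | exact hTmdiff 1 1
      | exact (hTmdiff 0 1).neg
      | exact (hTmdiff 1 0).neg
      | exact hTmdiff 0 0

lemma matD_const (c : Matrix (Fin 2) (Fin 2) ℂ) (t : ℝ) : matD (fun _ => c) t = 0 := by
  ext i j
  simp [matD]

/-- Sklyanin's Lax formulation for the double-row monodromy matrix
`Γ(t) = T⁺(t) K⁻(t) (T⁻(t))⁻¹ K⁺(t)`: if the single-row transition matrices `T⁺, T⁻`
(evaluated at `λ` and `−λ`) and the reflection matrices `K⁺, K⁻` obey the indicated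
differential constraints, then `Γ' = [V_L⁺, Γ]`. -/
theorem double_row_lax
    (VLp VLm V0p V0m : ℝ → Matrix (Fin 2) (Fin 2) ℂ)
    (hVLp : ∀ i j, Continuous fun t => VLp t i j)
    (hVLm : ∀ i j, Continuous fun t => VLm t i j)
    (hV0p : ∀ i j, Continuous fun t => V0p t i j)
    (hV0m : ∀ i j, Continuous fun t => V0m t i j)
    (Tp Tm Kp Km : ℝ → Matrix (Fin 2) (Fin 2) ℂ)
    (hTpdiff : ∀ i j, Differentiable ℝ fun t => Tp t i j)
    (hTmdiff : ∀ i j, Differentiable ℝ fun t => Tm t i j)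
    (hKpdiff : ∀ i j, Differentiable ℝ fun t => Kp t i j)
    (hKmdiff : ∀ i j, Differentiable ℝ fun t => Km t i j)
    (hTminv : ∀ t, IsUnit (Tm t))
    (hTp : ∀ t, matD Tp t = VLp t * Tp t - Tp t * V0p t)
    (hTm : ∀ t, matD Tm t = VLm t * Tm t - Tm t * V0m t)
    (hKp : ∀ t, matD Kp t = VLm t * Kp t - Kp t * VLp t)
    (hKm : ∀ t, matD Km t = V0p t * Km t - Km t * V0m t) :
    ∀ t : ℝ,
      matD (fun s => Tp s * Km s * (Tm s)⁻¹ * Kp s) t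
        = VLp t * (Tp t * Km t * (Tm t)⁻¹ * Kp t)
          - (Tp t * Km t * (Tm t)⁻¹ * Kp t) * VLp t := by
  intro t
  set G : ℝ → Matrix (Fin 2) (Fin 2) ℂ := fun s => (Tm s)⁻¹ with hGdef
  have hGdiff : ∀ i j, Differentiable ℝ fun t => G t i j := diff_invM hTmdiff hTminv
  have hgT : ∀ s, G s * Tm s = 1 := fun s =>
    Matrix.nonsing_inv_mul _ ((Matrix.isUnit_iff_isUnit_det _).mp (hTminv s))
  have hTg : ∀ s, Tm s * G s = 1 := fun s =>
    Matrix.mul_nonsing_inv _ ((Matrix.isUnit_iff_isUnit_det _).mp (hTminv s))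
  -- derivative of the inverse
  have hGTm : matD (fun s => G s * Tm s) t = 0 := by
    have : (fun s => G s * Tm s) = fun _ => (1 : Matrix (Fin 2) (Fin 2) ℂ) :=
      funext fun s => hgT s
    rw [this, matD_const]
  have hGderiv : matD G t = V0m t * G t - G t * VLm t := by
    have h1 : matD G t * Tm t + G t * matD Tm t = 0 := by
      rw [← matD_mul hGdiff hTmdiff t, hGTm]
    have h2 : matD G t * Tm t = -(G t * matD Tm t) := by
      linear_combination (norm := noncomm_ring) h1
    have h3 : matD G t = -(G t * matD Tm t) * G t := by
      calc matD G t = matD G t * (Tm t * G t) := by rw [hTg]; rw [mul_one]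
        _ = (matD G t * Tm t) * G t := by rw [mul_assoc]
        _ = -(G t * matD Tm t) * G t := by rw [h2]
    rw [h3, hTm t]
    have : G t * (VLm t * Tm t - Tm t * V0m t) * G t
        = G t * VLm t * (Tm t * G t) - G t * Tm t * (V0m t * G t) := by noncomm_ring
    rw [neg_mul, this, hTg, hgT]
    noncomm_ring
  -- product rule applications
  have hTKdiff : ∀ i j, Differentiable ℝ fun t => (Tp t * Km t) i j :=
    diff_mulM hTpdiff hKmdiff
  have hTKGdiff : ∀ i j, Differentiable ℝ fun t => (Tp t * Km t * G t) i j :=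
    diff_mulM hTKdiff hGdiff
  have e1 : matD (fun s => Tp s * Km s * G s * Kp s) t
      = matD (fun s => Tp s * Km s * G s) t * Kp t + (Tp t * Km t * G t) * matD Kp t :=
    matD_mul hTKGdiff hKpdiff t
  have e2 : matD (fun s => Tp s * Km s * G s) t
      = matD (fun s => Tp s * Km s) t * G t + (Tp t * Km t) * matD G t :=
    matD_mul hTKdiff hGdiff t
  have e3 : matD (fun s => Tp s * Km s) t = matD Tp t * Km t + Tp t * matD Km t :=
    matD_mul hTpdiff hKmdiff t
  rw [e1, e2, e3, hGderiv, hTp t, hKm t, hKp t]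
  noncomm_ring
end
end

section
/- Let N, M ≥ 0, β₁,…,β_N ∈ ℂ, α₁,…,α_M ∈ ℝ, ε ∈ {1, −1}, and define f(λ) = ∏_{j=1}^{N} (λ − β_j)(λ + conj(β_j)) · ∏_{ℓ=1}^{M} (λ − i α_ℓ), g(λ) = ∏_{j=1}^{N} (λ − conj(β_j))(λ + β_j) · ∏_{ℓ=1}^{M} (λ + i α_ℓ), and κ(λ) = ε·f(λ)/g(λ). Let 𝓛 : ℂ → Matrix (Fin 2) (Fin 2) ℂ, and suppose that for every λ ∈ ℂ with f(λ) ≠ 0, g(λ) ≠ 0, g(−λ) ≠ 0 and g(conj(λ)) ≠ 0, the matrix K(λ) := g(λ)⁻¹·𝓛(λ) satisfies det K(λ) = κ(λ), K(λ)·K(−λ) = 1, and κ(−λ)·K(λ) = σ₂ · conj(K(conj(λ))) · σ₂ (conjugation entrywise). Then for every such λ one has 𝓛(−λ) = ε·(−1)^M·adjugate(𝓛(λ)) and ε·𝓛(λ) = σ₂ · conj(𝓛(conj(λ))) · σ₂; in particular, writing 𝓛 = !![𝒜, ℬ; 𝒞, 𝒟], one has 𝒟(λ) = ε·(−1)^M·𝒜(−λ),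 𝒟(λ) = ε·conj(𝒜(conj(λ))), ℬ(−λ) = −ε·(−1)^M·ℬ(λ), and 𝒞(λ) = −ε·conj(ℬ(conj(λ))). -/
open Matrix Finset

noncomputable section

/-- The Pauli matrix σ₂. -/
def σ2 : Matrix (Fin 2) (Fin 2) ℂ := !![0, -Complex.I; Complex.I, 0]

/-- The numerator polynomial `f(λ) = ∏ⱼ (λ − βⱼ)(λ + conj βⱼ) ∏ₗ (λ − iαₗ)`. -/
def fpoly (N M : ℕ) (β : Fin N → ℂ) (α : Fin M → ℝ) (lam : ℂ) : ℂ :=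
  (∏ j, (lam - β j) * (lam + starRingEnd ℂ (β j))) * ∏ l, (lam - Complex.I * α l)

/-- The denominator polynomial `g(λ) = ∏ⱼ (λ − conj βⱼ)(λ + βⱼ) ∏ₗ (λ + iαₗ)`. -/
def gpoly (N M : ℕ) (β : Fin N → ℂ) (α : Fin M → ℝ) (lam : ℂ) : ℂ :=
  (∏ j, (lam - starRingEnd ℂ (β j)) * (lam + β j)) * ∏ l, (lam + Complex.I * α l)

lemma fpoly_neg (N M : ℕ) (β : Fin N → ℂ) (α : Fin M → ℝ) (lam : ℂ) :
    fpoly N M β α (-lam) = (-1)^M * gpoly N M β α lam := by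
  unfold fpoly gpoly
  rw [show (∏ j, (-lam - β j) * (-lam + starRingEnd ℂ (β j)))
      = ∏ j, (lam - starRingEnd ℂ (β j)) * (lam + β j) from
    Finset.prod_congr rfl fun j _ => by ring]
  rw [show (∏ l, (-lam - Complex.I * (α l : ℂ)))
      = ∏ l, (-1 : ℂ) * (lam + Complex.I * α l) from
    Finset.prod_congr rfl fun l _ => by ring]
  simp only [Finset.prod_mul_distrib, Finset.prod_const, Finset.card_univ, Fintype.card_fin]
  ring

lemma gpoly_neg (N M : ℕ) (β : Fin N → ℂ) (α : Fin M → ℝ) (lam : ℂ) :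
    gpoly N M β α (-lam) = (-1)^M * fpoly N M β α lam := by
  unfold fpoly gpoly
  rw [show (∏ j, (-lam - starRingEnd ℂ (β j)) * (-lam + β j))
      = ∏ j, (lam - β j) * (lam + starRingEnd ℂ (β j)) from
    Finset.prod_congr rfl fun j _ => by ring]
  rw [show (∏ l, (-lam + Complex.I * (α l : ℂ)))
      = ∏ l, (-1 : ℂ) * (lam - Complex.I * α l) from
    Finset.prod_congr rfl fun l _ => by ring]
  simp only [Finset.prod_mul_distrib, Finset.prod_const, Finset.card_univ, Fintype.card_fin]
  ring

lemma conj_gpoly_conj (N M : ℕ) (β : Fin N → ℂ) (α : Fin M → ℝ) (lam : ℂ) :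
    starRingEnd ℂ (gpoly N M β α (starRingEnd ℂ lam)) = fpoly N M β α lam := by
  unfold fpoly gpoly
  simp only [_root_.map_mul, map_prod, map_sub, map_add, Complex.conj_conj, Complex.conj_ofReal,
    Complex.conj_I]
  exact congrArg₂ (· * ·) (Finset.prod_congr rfl fun j _ => by ring) (Finset.prod_congr rfl fun l _ => by ring)

lemma sigma_conj (B : Matrix (Fin 2) (Fin 2) ℂ) :
    σ2 * B * σ2 = !![B 1 1, -(B 1 0); -(B 0 1), B 0 0] := by
  rw [Matrix.eta_fin_two B]
  ext i j
  fin_cases i <;> fin_cases j <;>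
    simp [σ2, Matrix.mul_apply, Fin.sum_univ_two] <;> ring_nf <;> simp [Complex.I_sq]

/-- Relations between the entries of the polynomial numerator matrix `𝓛(λ) = g(λ)K(λ)`
of a reflection matrix satisfying the normalization property (R). -/
theorem L_entry_relations (N M : ℕ) (β : Fin N → ℂ) (α : Fin M → ℝ)
    (ε : ℂ) (hε : ε = 1 ∨ ε = -1)
    (L : ℂ → Matrix (Fin 2) (Fin 2) ℂ)
    (hyp : ∀ lam : ℂ, fpoly N M β α lam ≠ 0 → gpoly N M β α lam ≠ 0 →
      gpoly N M β α (-lam) ≠ 0 → gpoly N M β α (starRingEnd ℂ lam) ≠ 0 →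
      ((gpoly N M β α lam)⁻¹ • L lam).det
          = ε * fpoly N M β α lam / gpoly N M β α lam ∧
      ((gpoly N M β α lam)⁻¹ • L lam) * ((gpoly N M β α (-lam))⁻¹ • L (-lam)) = 1 ∧
      (ε * fpoly N M β α (-lam) / gpoly N M β α (-lam)) • ((gpoly N M β α lam)⁻¹ • L lam)
        = σ2 * (((gpoly N M β α (starRingEnd ℂ lam))⁻¹
            • L (starRingEnd ℂ lam)).map (starRingEnd ℂ)) * σ2) :
    ∀ lam : ℂ, fpoly N M β α lam ≠ 0 → gpoly N M β α lam ≠ 0 →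
      gpoly N M β α (-lam) ≠ 0 → gpoly N M β α (starRingEnd ℂ lam) ≠ 0 →
      L (-lam) = (ε * (-1) ^ M) • (L lam).adjugate ∧
      ε • L lam = σ2 * ((L (starRingEnd ℂ lam)).map (starRingEnd ℂ)) * σ2 ∧
      L lam 1 1 = ε * (-1) ^ M * L (-lam) 0 0 ∧
      L lam 1 1 = ε * starRingEnd ℂ (L (starRingEnd ℂ lam) 0 0) ∧
      L (-lam) 0 1 = -(ε * (-1) ^ M) * L lam 0 1 ∧
      L lam 1 0 = -ε * starRingEnd ℂ (L (starRingEnd ℂ lam) 0 1) := by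
  intro lam hf hg hg' hgc
  obtain ⟨h1, h2, h3⟩ := hyp lam hf hg hg' hgc
  set f := fpoly N M β α lam with hfdef
  set g := gpoly N M β α lam with hgdef
  set g' := gpoly N M β α (-lam) with hg'def
  set gc := gpoly N M β α (starRingEnd ℂ lam) with hgcdef
  set A := L lam with hA
  set B := L (-lam) with hB
  set C := L (starRingEnd ℂ lam) with hC
  have hε2 : ε * ε = 1 := by rcases hε with h | h <;> simp [h]
  have hεne : ε ≠ 0 := by rcases hε with h | h <;> simp [h]
  have hm : ((-1 : ℂ) ^ M) * ((-1) ^ M) = 1 := by rw [← mul_pow]; norm_num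
  have hfneg : fpoly N M β α (-lam) = (-1)^M * g := fpoly_neg N M β α lam
  have hgneg : g' = (-1)^M * f := gpoly_neg N M β α lam
  have hconjgc : starRingEnd ℂ gc = f := conj_gpoly_conj N M β α lam
  -- determinant of A
  have hdet : A.det = ε * f * g := by
    rw [Matrix.det_smul] at h1
    simp only [Fintype.card_fin] at h1
    field_simp at h1
    exact mul_right_cancel₀ hg (by linear_combination g * h1)
  -- key multiplication relation
  have hkey : A * B = (g * g') • 1 := by
    rw [Matrix.smul_mul, Matrix.mul_smul, smul_smul] at h2
    have := congrArg (fun X => (g * g') • X) h2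
    simp only [smul_smul, smul_one] at this
    rw [show g * g' * (g⁻¹ * g'⁻¹) = 1 by field_simp, one_smul] at this
    exact this
  -- part 1
  have part1 : B = (ε * (-1) ^ M) • A.adjugate := by
    have h4 := congrArg (fun X => A.adjugate * X) hkey
    simp only [Matrix.mul_smul, Matrix.mul_one, ← Matrix.mul_assoc,
      Matrix.adjugate_mul, Matrix.smul_mul, Matrix.one_mul] at h4
    -- h4 : A.det • B = (g * g') • A.adjugate
    have h5 := congrArg (fun X => (ε * f * g)⁻¹ • X) h4
    simp only [smul_smul, hdet] at h5
    rw [inv_mul_cancel₀ (by simp [hεne, hf, hg] : ε * f * g ≠ 0), one_smul] at h5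
    rw [h5, hgneg]
    congr 1
    field_simp
    linear_combination (-1 : ℂ) * hε2
  -- part 2
  have hmapsmul : ((gc⁻¹ • C).map (starRingEnd ℂ)) = (starRingEnd ℂ gc)⁻¹ • (C.map (starRingEnd ℂ)) := by
    ext i j; simp [Matrix.map_apply, map_inv₀]
  have part2 : ε • A = σ2 * (C.map (starRingEnd ℂ)) * σ2 := by
    rw [hmapsmul, hconjgc, Matrix.mul_smul, Matrix.smul_mul, smul_smul, hfneg, hgneg] at h3
    have h6 := congrArg (fun X => f • X) h3
    simp only [smul_smul] at h6
    rw [show f * (ε * ((-1)^M * g) / ((-1)^M * f) * g⁻¹) = ε by field_simp,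
      show f * f⁻¹ = 1 from mul_inv_cancel₀ hf, one_smul] at h6
    exact h6
  refine ⟨part1, part2, ?_, ?_, ?_, ?_⟩
  · have h0 : B 0 0 = ε * (-1)^M * A 1 1 := by
      rw [part1, Matrix.adjugate_fin_two]; simp
    rw [h0]
    linear_combination (-(A 1 1 * ((-1:ℂ))^M * ((-1):ℂ)^M)) * hε2 - A 1 1 * hm
  · have h7 := congrFun (congrFun (part2.trans (sigma_conj _)) 1) 1
    simp [Matrix.smul_apply] at h7
    linear_combination ε * h7 - A 1 1 * hε2
  · have h0 : B 0 1 = ε * (-1)^M * (-(A 0 1)) := by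
      rw [part1, Matrix.adjugate_fin_two]; simp
    rw [h0]; ring
  · have h7 := congrFun (congrFun (part2.trans (sigma_conj _)) 1) 0
    simp [Matrix.smul_apply] at h7
    linear_combination ε * h7 - A 1 0 * hε2
end
end

section
/- Let a ∈ ℂ with conj(a) = −a (purely imaginary), and let u, p : ℝ → ℂ be functions. Define the constant (t-independent) diagonal matrix 𝓛(λ) = !![λ + a, 0; 0, a − λ]. Then the identity V(t;−λ)·𝓛(λ) − 𝓛(λ)·V(t;λ) = 0 holds for all λ ∈ ℂ and all t ∈ ℝ if and only if the Robin boundary condition p(t) = 2·i·a·u(t) holds for all t ∈ ℝ. -/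
open Matrix

noncomputable section

/-- The Pauli matrix σ₃. -/
def σ3 : Matrix (Fin 2) (Fin 2) ℂ := !![1, 0; 0, -1]

/-- The boundary potential matrix `Q(t)` built from `u(t) = q(0,t)`. -/
def Qb (u : ℝ → ℂ) (t : ℝ) : Matrix (Fin 2) (Fin 2) ℂ :=
  !![0, u t; -(starRingEnd ℂ) (u t), 0]

/-- The boundary matrix `P(t)` built from `p(t) = ∂ₓq(0,t)`. -/
def Pb (p : ℝ → ℂ) (t : ℝ) : Matrix (Fin 2) (Fin 2) ℂ :=
  !![0, p t; -(starRingEnd ℂ) (p t), 0]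

/-- The NLS time-Lax matrix `V(t;λ)` evaluated at the boundary. -/
def Vt (u p : ℝ → ℂ) (t : ℝ) (lam : ℂ) : Matrix (Fin 2) (Fin 2) ℂ :=
  (-2 * Complex.I * lam ^ 2) • σ3 + (2 * lam) • Qb u t
    - Complex.I • (Pb p t * σ3) - Complex.I • (Qb u t ^ 2 * σ3)

lemma Vt_eq (u p : ℝ → ℂ) (t : ℝ) (lam : ℂ) :
    Vt u p t lam =
      !![-2 * Complex.I * lam ^ 2 + Complex.I * (u t * (starRingEnd ℂ) (u t)),
          2 * lam * u t + Complex.I * p t;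
          -2 * lam * (starRingEnd ℂ) (u t) + Complex.I * (starRingEnd ℂ) (p t),
          2 * Complex.I * lam ^ 2 - Complex.I * (u t * (starRingEnd ℂ) (u t))] := by
  ext i j
  fin_cases i <;> fin_cases j <;>
    simp [Vt, σ3, Qb, Pb, Matrix.mul_apply, Fin.sum_univ_two, pow_two] <;> ring

/-- Case 1: for the constant diagonal matrix `𝓛(λ) = !![λ + a, 0; 0, a − λ]` with `a`
purely imaginary, the Sklyanin constraint `V(t;−λ)𝓛(λ) − 𝓛(λ)V(t;λ) = 0` holds for all
`λ` and `t` iff the Robin boundary condition `p(t) = 2 i a u(t)` holds for all `t`. -/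
theorem robin_boundary_condition (a : ℂ) (ha : starRingEnd ℂ a = -a)
    (u p : ℝ → ℂ) :
    (∀ (lam : ℂ) (t : ℝ),
        Vt u p t (-lam) * !![lam + a, 0; 0, a - lam]
          - !![lam + a, 0; 0, a - lam] * Vt u p t lam = 0)
      ↔ (∀ t : ℝ, p t = 2 * Complex.I * a * u t) := by
  constructor
  · intro h t
    have h1 := congrFun (congrFun (h 1 t) 0) 1
    simp [Vt_eq, Matrix.mul_apply, Fin.sum_univ_two] at h1
    have h3 : 2 * a * u t + Complex.I * p t = 0 := by
      linear_combination (-(1:ℂ)/2) * h1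
    linear_combination (-Complex.I) * h3 + (p t) * Complex.I_sq
  · intro h lam t
    have hp := h t
    have hpc : (starRingEnd ℂ) (p t) = 2 * Complex.I * a * (starRingEnd ℂ) (u t) := by
      simp only [hp, _root_.map_mul, Complex.conj_I, ha, Complex.conj_ofNat]
      ring
    ext i j
    fin_cases i <;> fin_cases j <;>
      simp [Vt_eq, Matrix.mul_apply, Fin.sum_univ_two, hp, hpc, Complex.conj_ofNat, ha] <;>
      ring_nf <;> simp [Complex.I_sq] <;> ring_nf
end
end

section
/- Let β₁ ∈ ℂ, let Π ∈ ℝ be a constant with Π² = |β₁|⁴, let u, p : ℝ → ℂ be differentiable, and let Ω : ℝ → ℝ be differentiable with Ω(t) ≠ 0 and Ω(t)² = −(β₁ − conj(β₁))² − |u(t)|² (equivalently Ω(t)² = 4·(Im β₁)² − |u(t)|²) for all t, and suppose the boundary condition i·u'(t) + 2·|u(t)|²·u(t) − 2·p(t)·Ω(t) + 4·u(t)·Π = 0 holds for all t. Define 𝓛(t;λ) = !![λ² + iλΩ(t) + Π, i·u(t)·λ; i·conj(u(t))·λ, λ² − iλΩ(t) + Π]. Then ∂ₜ𝓛(t;λ)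 = V(t;−λ)·𝓛(t;λ) − 𝓛(t;λ)·V(t;λ) for all λ ∈ ℂ and all t ∈ ℝ. -/
open Matrix

noncomputable section

/-- The numerator matrix of the Case 3 (Zambon) reflection matrix. -/
def L3 (u : ℝ → ℂ) (Ω : ℝ → ℝ) (P' : ℝ) (t : ℝ) (lam : ℂ) : Matrix (Fin 2) (Fin 2) ℂ :=
  !![lam ^ 2 + Complex.I * lam * Ω t + P', Complex.I * u t * lam;
     Complex.I * starRingEnd ℂ (u t) * lam, lam ^ 2 - Complex.I * lam * Ω t + P']

/-- Case 3 (the time-dependent boundary conditions of Zambon): under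
`Ω² = −(β₁ − conj β₁)² − |u|²`, `Π² = |β₁|⁴` and the boundary condition
`i u' + 2|u|²u − 2pΩ + 4uΠ = 0`, the matrix `𝓛(t;λ)` satisfies the Sklyanin
constraint `∂ₜ𝓛 = V(t;−λ)𝓛 − 𝓛V(t;λ)`. -/
theorem zambon_boundary (β₁ : ℂ) (P' : ℝ) (hP : P' ^ 2 = ‖β₁‖ ^ 4)
    (u p : ℝ → ℂ) (Ω : ℝ → ℝ)
    (hu : Differentiable ℝ u) (hp : Differentiable ℝ p) (hΩ : Differentiable ℝ Ω)
    (hΩne : ∀ t : ℝ, Ω t ≠ 0)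
    (hΩsq : ∀ t : ℝ, ((Ω t : ℂ)) ^ 2
      = -(β₁ - starRingEnd ℂ β₁) ^ 2 - (‖u t‖ : ℂ) ^ 2)
    (hbc : ∀ t : ℝ, Complex.I * deriv u t + 2 * (‖u t‖ : ℂ) ^ 2 * u t
      - 2 * p t * (Ω t : ℂ) + 4 * u t * (P' : ℂ) = 0) :
    ∀ (lam : ℂ) (t : ℝ),
      (Matrix.of fun i j => deriv (fun s => L3 u Ω P' s lam i j) t)
        = Vt u p t (-lam) * L3 u Ω P' t lam - L3 u Ω P' t lam * Vt u p t lam := by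
  intro lam t
  have habs : ∀ s : ℝ, ((‖u s‖ : ℂ)) ^ 2 = u s * (starRingEnd ℂ) (u s) := by
    intro s
    rw [← Complex.ofReal_pow, Complex.sq_norm, Complex.mul_conj]
  set A := u t with hA
  set A' := deriv u t with hA'
  set B := p t with hB
  have hu' : HasDerivAt u A' t := (hu t).hasDerivAt
  have hcu : HasDerivAt (fun s => (starRingEnd ℂ) (u s)) ((starRingEnd ℂ) A') t := by
    simpa using hu'.star
  have hΩ' : HasDerivAt (fun s => ((Ω s : ℂ))) ((deriv Ω t : ℝ) : ℂ) t :=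
    ((hΩ t).hasDerivAt).ofReal_comp
  set W : ℂ := ((Ω t : ℝ) : ℂ) with hW
  set W' : ℂ := ((deriv Ω t : ℝ) : ℂ) with hW'
  -- boundary condition and its conjugate
  have h1 : Complex.I * A' + 2 * (A * (starRingEnd ℂ) A) * A - 2 * B * W
      + 4 * A * (P' : ℂ) = 0 := by
    have := hbc t
    rw [habs t] at this
    linear_combination this
  have h2 : -Complex.I * (starRingEnd ℂ) A' + 2 * (A * (starRingEnd ℂ) A) * (starRingEnd ℂ) A
      - 2 * (starRingEnd ℂ) B * W + 4 * (starRingEnd ℂ) A * (P' : ℂ) = 0 := by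
    have hc := congrArg (starRingEnd ℂ) h1
    simp only [map_add, map_sub, _root_.map_mul, map_zero, map_ofNat, Complex.conj_I,
      Complex.conj_conj, Complex.conj_ofReal] at hc
    have hWr : (starRingEnd ℂ) W = W := by rw [hW]; exact Complex.conj_ofReal _
    linear_combination hc + 2 * (starRingEnd ℂ) B * hWr
  -- derivative of Ω² relation
  have hF : HasDerivAt (fun s => ((Ω s : ℂ)) * ((Ω s : ℂ))) (W' * W + W * W') t :=
    hΩ'.mul hΩ'
  have hG : HasDerivAt (fun s => -(β₁ - starRingEnd ℂ β₁) ^ 2 - u s * (starRingEnd ℂ) (u s))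
      (-(A' * (starRingEnd ℂ) A + A * (starRingEnd ℂ) A')) t :=
    HasDerivAt.const_sub _ (hu'.mul hcu)
  have hFG : (fun s => ((Ω s : ℂ)) * ((Ω s : ℂ)))
      = (fun s => -(β₁ - starRingEnd ℂ β₁) ^ 2 - u s * (starRingEnd ℂ) (u s)) := by
    funext s
    rw [← pow_two, hΩsq s, habs s]
  have h3 : W' * W + W * W' = -(A' * (starRingEnd ℂ) A + A * (starRingEnd ℂ) A') := by
    refine hF.unique ?_
    rw [hFG]; exact hG
  -- explicit derivative formulas
  have ha' : A' = Complex.I * (2 * (A * (starRingEnd ℂ) A) * A - 2 * B * W + 4 * A * (P' : ℂ)) := by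
    linear_combination (-Complex.I) * h1 + A' * Complex.I_sq
  have hca' : (starRingEnd ℂ) A' = -Complex.I * (2 * (A * (starRingEnd ℂ) A) * (starRingEnd ℂ) A
      - 2 * (starRingEnd ℂ) B * W + 4 * (starRingEnd ℂ) A * (P' : ℂ)) := by
    linear_combination Complex.I * h2 + ((starRingEnd ℂ) A') * Complex.I_sq
  have h2w : (2 : ℂ) * W ≠ 0 :=
    mul_ne_zero two_ne_zero (Complex.ofReal_ne_zero.mpr (hΩne t))
  have hw' : W' = Complex.I * (B * (starRingEnd ℂ) A - A * (starRingEnd ℂ) B) := by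
    refine mul_left_cancel₀ h2w ?_
    linear_combination h3 + (Complex.I * (starRingEnd ℂ) A) * h1 + (-(Complex.I * A)) * h2
      + (-(A' * (starRingEnd ℂ) A + A * (starRingEnd ℂ) A')) * Complex.I_sq
  -- entry derivatives
  have e00 : deriv (fun s => L3 u Ω P' s lam 0 0) t = Complex.I * lam * W' := by
    have hfun : (fun s => L3 u Ω P' s lam 0 0)
        = (fun s => lam ^ 2 + Complex.I * lam * ((Ω s : ℂ)) + (P' : ℂ)) := by
      funext s; simp [L3]
    rw [hfun]
    exact (((HasDerivAt.const_mul (Complex.I * lam) hΩ').const_add (lam ^ 2)).add_const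
      (P' : ℂ)).deriv
  have e01 : deriv (fun s => L3 u Ω P' s lam 0 1) t = Complex.I * A' * lam := by
    have hfun : (fun s => L3 u Ω P' s lam 0 1) = (fun s => Complex.I * u s * lam) := by
      funext s; simp [L3]
    rw [hfun]
    exact ((HasDerivAt.const_mul Complex.I hu').mul_const lam).deriv
  have e10 : deriv (fun s => L3 u Ω P' s lam 1 0) t
      = Complex.I * (starRingEnd ℂ) A' * lam := by
    have hfun : (fun s => L3 u Ω P' s lam 1 0)
        = (fun s => Complex.I * (starRingEnd ℂ) (u s) * lam) := by
      funext s; simp [L3]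
    rw [hfun]
    exact ((HasDerivAt.const_mul Complex.I hcu).mul_const lam).deriv
  have e11 : deriv (fun s => L3 u Ω P' s lam 1 1) t = -(Complex.I * lam * W') := by
    have hfun : (fun s => L3 u Ω P' s lam 1 1)
        = (fun s => lam ^ 2 - Complex.I * lam * ((Ω s : ℂ)) + (P' : ℂ)) := by
      funext s; simp [L3]
    rw [hfun]
    have := ((HasDerivAt.const_sub (lam ^ 2)
      (HasDerivAt.const_mul (Complex.I * lam) hΩ')).add_const (P' : ℂ)).deriv
    simpa using this
  ext i j
  fin_cases i <;> fin_cases j <;>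
    (simp only [Fin.zero_eta, Fin.mk_one, Fin.isValue, Matrix.of_apply, e00, e01, e10, e11];
     simp only [Vt, L3, Qb, Pb, σ3, Matrix.sub_apply, Matrix.add_apply, Matrix.smul_apply,
       Matrix.mul_apply, Fin.sum_univ_two, smul_eq_mul, Matrix.of_apply, pow_two,
       Matrix.cons_val', Matrix.cons_val_zero, Matrix.cons_val_one, Matrix.head_cons,
       Matrix.head_fin_const, Matrix.empty_val', Matrix.cons_val_fin_one])
  · rw [hw']; ring
  · rw [ha']
    linear_combination (4 * A * lam ^ 3 + 4 * A * lam * (P' : ℂ)) * Complex.I_sq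
  · rw [hca']
    linear_combination (-(4 * (starRingEnd ℂ) A * lam ^ 3
      + 4 * (starRingEnd ℂ) A * lam * (P' : ℂ))) * Complex.I_sq
  · rw [hw']; ring
end
end

section
/- Let α₁, α₂ ∈ ℝ, let Π ∈ ℝ be a constant with Π² = α₁²·α₂², let u, p : ℝ → ℂ be differentiable, and let Ω : ℝ → ℝ be differentiable with Ω(t) ≠ 0 and Ω(t)² = (α₁ + α₂)² − |u(t)|² for all t, and suppose the boundary condition i·u'(t) + 2·|u(t)|²·u(t) − 2·p(t)·Ω(t) + 4·u(t)·Π = 0 holds for all t. Define 𝓛(t;λ) = !![λ² + iλΩ(t) + Π, i·u(t)·λ; i·conj(u(t))·λ, λ² − iλΩ(t) + Π]. Then ∂ₜ𝓛(t;λ) = V(t;−λ)·𝓛(t;λ) − 𝓛(t;λ)·V(t;λ) for all λ ∈ ℂ and all t ∈ ℝ. -/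
open Matrix

noncomputable section

set_option maxHeartbeats 1000000 in
/-- Case 4 (deformed Zambon boundary conditions): under
`Ω² = (α₁ + α₂)² − |u|²`, `Π² = α₁²α₂²` and the boundary condition
`i u' + 2|u|²u − 2pΩ + 4uΠ = 0`, the matrix `𝓛(t;λ)` satisfies the Sklyanin
constraint `∂ₜ𝓛 = V(t;−λ)𝓛 − 𝓛V(t;λ)`. -/
theorem deformed_zambon_boundary (α₁ α₂ : ℝ) (P' : ℝ)
    (hP : P' ^ 2 = α₁ ^ 2 * α₂ ^ 2)
    (u p : ℝ → ℂ) (Ω : ℝ → ℝ)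
    (hu : Differentiable ℝ u) (hp : Differentiable ℝ p) (hΩ : Differentiable ℝ Ω)
    (hΩne : ∀ t : ℝ, Ω t ≠ 0)
    (hΩsq : ∀ t : ℝ, Ω t ^ 2 = (α₁ + α₂) ^ 2 - ‖u t‖ ^ 2)
    (hbc : ∀ t : ℝ, Complex.I * deriv u t + 2 * (‖u t‖ : ℂ) ^ 2 * u t
      - 2 * p t * (Ω t : ℂ) + 4 * u t * (P' : ℂ) = 0) :
    ∀ (lam : ℂ) (t : ℝ),
      (Matrix.of fun i j => deriv (fun s => L3 u Ω P' s lam i j) t)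
        = Vt u p t (-lam) * L3 u Ω P' t lam - L3 u Ω P' t lam * Vt u p t lam := by
  intro lam t
  have habs : ∀ s : ℝ, ((‖u s‖ : ℂ)) ^ 2 = u s * (starRingEnd ℂ) (u s) := by
    intro s
    rw [← Complex.ofReal_pow, ← Complex.normSq_eq_norm_sq, Complex.mul_conj]
  -- derivatives
  have hdu : HasDerivAt u (deriv u t) t := (hu t).hasDerivAt
  have hduc : HasDerivAt (fun s => (starRingEnd ℂ) (u s)) ((starRingEnd ℂ) (deriv u t)) t :=
    hdu.star
  have hdΩ : HasDerivAt (fun s => ((Ω s : ℂ))) (Complex.ofReal (deriv Ω t)) t :=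
    ((hΩ t).hasDerivAt).ofReal_comp
  -- differentiating `Ω² = (α₁+α₂)² − u ū`
  have hΩd : 2 * (Ω t : ℂ) * (Complex.ofReal (deriv Ω t))
      = -(deriv u t * (starRingEnd ℂ) (u t) + u t * (starRingEnd ℂ) (deriv u t)) := by
    have h1 : HasDerivAt (fun s => ((Ω s : ℂ)) ^ 2)
        (2 * (Ω t : ℂ) * (Complex.ofReal (deriv Ω t))) t := by
      have := hdΩ.pow 2
      refine this.congr_deriv ?_
      norm_num
    have h2 : HasDerivAt (fun s => (((α₁ + α₂) ^ 2 : ℝ) : ℂ) - u s * (starRingEnd ℂ) (u s))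
        (-(deriv u t * (starRingEnd ℂ) (u t) + u t * (starRingEnd ℂ) (deriv u t))) t := by
      have := (hasDerivAt_const t ((((α₁ + α₂) ^ 2 : ℝ)) : ℂ)).sub (hdu.mul hduc)
      exact this.congr_deriv (by ring)
    have heq : (fun s => ((Ω s : ℂ)) ^ 2)
        = fun s => (((α₁ + α₂) ^ 2 : ℝ) : ℂ) - u s * (starRingEnd ℂ) (u s) := by
      funext s
      rw [← habs s, ← Complex.ofReal_pow, ← Complex.ofReal_pow, hΩsq s]
      push_cast
      ring
    rw [heq] at h1
    exact h1.unique h2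
  -- boundary condition with `u ū` instead of `|u|²`
  have hbc' : Complex.I * deriv u t + 2 * (u t * (starRingEnd ℂ) (u t)) * u t
      - 2 * p t * (Ω t : ℂ) + 4 * u t * (P' : ℂ) = 0 := by
    have := hbc t; rw [habs t] at this; linear_combination this
  -- conjugated boundary condition
  have hbcc : -Complex.I * (starRingEnd ℂ) (deriv u t)
      + 2 * (u t * (starRingEnd ℂ) (u t)) * (starRingEnd ℂ) (u t)
      - 2 * (starRingEnd ℂ) (p t) * (Ω t : ℂ)
      + 4 * (starRingEnd ℂ) (u t) * (P' : ℂ) = 0 := by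
    have h := congrArg (starRingEnd ℂ) hbc'
    simp only [map_add, map_sub, _root_.map_mul, map_zero, map_ofNat, Complex.conj_I,
      Complex.conj_ofReal, RingHomCompTriple.comp_apply, RingHom.id_apply,
      Complex.conj_conj] at h
    linear_combination h
  have hΩtne : (Ω t : ℂ) ≠ 0 := Complex.ofReal_ne_zero.mpr (hΩne t)
  -- key identity `i Ω' = u p̄ − p ū`
  have hkey : Complex.I * Complex.ofReal (deriv Ω t)
      = u t * (starRingEnd ℂ) (p t) - p t * (starRingEnd ℂ) (u t) := by
    have hmul : (2 * (Ω t : ℂ)) * (Complex.I * Complex.ofReal (deriv Ω t))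
        = (2 * (Ω t : ℂ)) * (u t * (starRingEnd ℂ) (p t) - p t * (starRingEnd ℂ) (u t)) := by
      linear_combination Complex.I * hΩd - (starRingEnd ℂ) (u t) * hbc' + u t * hbcc
    exact mul_left_cancel₀ (by simpa using hΩtne) hmul
  -- entrywise derivative of L3
  have hL : (Matrix.of fun i j => deriv (fun s => L3 u Ω P' s lam i j) t)
      = !![Complex.I * lam * Complex.ofReal (deriv Ω t), Complex.I * deriv u t * lam;
           Complex.I * (starRingEnd ℂ) (deriv u t) * lam,
           -(Complex.I * lam * Complex.ofReal (deriv Ω t))] := by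
    ext i j
    fin_cases i <;> fin_cases j
    · have e : (fun s => L3 u Ω P' s lam 0 0)
          = fun s => lam ^ 2 + Complex.I * lam * (Ω s : ℂ) + (P' : ℂ) := by
        funext s; simp [L3]
      have hd : HasDerivAt (fun s => lam ^ 2 + Complex.I * lam * ((Ω s : ℂ)) + (P' : ℂ))
          (Complex.I * lam * Complex.ofReal (deriv Ω t)) t := by
        simpa using (((hdΩ.const_mul (Complex.I * lam)).const_add (lam ^ 2)).add_const (P' : ℂ))
      show deriv (fun s => L3 u Ω P' s lam 0 0) t = _
      rw [e]; exact hd.deriv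
    · have e : (fun s => L3 u Ω P' s lam 0 1) = fun s => Complex.I * u s * lam := by
        funext s; simp [L3]
      have hd : HasDerivAt (fun s => Complex.I * u s * lam)
          (Complex.I * deriv u t * lam) t := by
        simpa [mul_assoc] using ((hdu.const_mul Complex.I).mul_const lam)
      show deriv (fun s => L3 u Ω P' s lam 0 1) t = _
      rw [e]; exact hd.deriv
    · have e : (fun s => L3 u Ω P' s lam 1 0)
          = fun s => Complex.I * (starRingEnd ℂ) (u s) * lam := by
        funext s; simp [L3]
      have hd : HasDerivAt (fun s => Complex.I * (starRingEnd ℂ) (u s) * lam)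
          (Complex.I * (starRingEnd ℂ) (deriv u t) * lam) t := by
        simpa [mul_assoc] using ((hduc.const_mul Complex.I).mul_const lam)
      show deriv (fun s => L3 u Ω P' s lam 1 0) t = _
      rw [e]; exact hd.deriv
    · have e : (fun s => L3 u Ω P' s lam 1 1)
          = fun s => lam ^ 2 - Complex.I * lam * (Ω s : ℂ) + (P' : ℂ) := by
        funext s; simp [L3]
      have hd : HasDerivAt (fun s => lam ^ 2 - Complex.I * lam * ((Ω s : ℂ)) + (P' : ℂ))
          (-(Complex.I * lam * Complex.ofReal (deriv Ω t))) t := by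
        simpa using (((hdΩ.const_mul (Complex.I * lam)).const_sub (lam ^ 2)).add_const (P' : ℂ))
      show deriv (fun s => L3 u Ω P' s lam 1 1) t = _
      rw [e]; exact hd.deriv
  rw [hL, Vt_eq, Vt_eq]
  ext i j
  fin_cases i <;> fin_cases j
  · simp [L3, Matrix.mul_apply, Fin.sum_univ_succ]
    linear_combination lam * hkey
      + (lam * (u t * (starRingEnd ℂ) (p t) - p t * (starRingEnd ℂ) (u t))) * Complex.I_sq
  · simp [L3, Matrix.mul_apply, Fin.sum_univ_succ]
    linear_combination lam * hbc'
      + (-2 * lam * u t ^ 2 * (starRingEnd ℂ) (u t) + 2 * lam * p t * ((Ω t : ℝ) : ℂ)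
          + 4 * lam ^ 3 * u t) * Complex.I_sq
  · simp [L3, Matrix.mul_apply, Fin.sum_univ_succ]
    linear_combination (-lam) * hbcc
      + (2 * lam * (starRingEnd ℂ) (u t) ^ 2 * u t - 2 * lam * (starRingEnd ℂ) (p t) * ((Ω t : ℝ) : ℂ)
          - 4 * lam ^ 3 * (starRingEnd ℂ) (u t)) * Complex.I_sq
  · simp [L3, Matrix.mul_apply, Fin.sum_univ_succ]
    linear_combination (-lam) * hkey
      + (lam * (p t * (starRingEnd ℂ) (u t) - u t * (starRingEnd ℂ) (p t))) * Complex.I_sq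
end
end

section
/- Let β₁ ∈ ℂ, let u, p : ℝ → ℂ be functions, and let A₁, A₂ : ℝ → ℂ and B₂ : ℝ → ℂ be differentiable with: conj(A₁(t)) = −A₁(t) (A₁ purely imaginary valued), conj(A₂(t)) = A₂(t) (A₂ real valued), A₁(t) ≠ 0 and A₂(t) ≠ 0 for all t; the algebraic constraints A₁(t)² − 2·A₂(t) = β₁² + conj(β₁)² and A₂(t)² + |B₂(t)|² = |β₁|⁴ for all t; the differential constraint B₂'(t) = 2·i·|u(t)|²·B₂(t) − 2·i·p(t)·A₂(t) for all t; and the implicit boundary condition 2·u(t)·A₁(t) + 2·i·B₂(t) + i·p(t) = 0 for all t. Define 𝓛(t;λ) = !![λ² + A₁(t)·λ + A₂(t), B₂(t); conj(B₂(t)), −λ² + A₁(t)·λ − A₂(t)]. Then ∂ₜ𝓛(t;λ) = V(t;−λ)·𝓛(t;λ) − 𝓛(t;λ)·V(t;λ) for all λ ∈ ℂ and all t ∈ ℝ. -/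
open Matrix

noncomputable section

/-- The numerator matrix of the Case 5 (implicit boundary conditions I) reflection
matrix, involving additional boundary fields `A₁, A₂, B₂`. -/
def L5 (A₁ A₂ B₂ : ℝ → ℂ) (t : ℝ) (lam : ℂ) : Matrix (Fin 2) (Fin 2) ℂ :=
  !![lam ^ 2 + A₁ t * lam + A₂ t, B₂ t;
     starRingEnd ℂ (B₂ t), -lam ^ 2 + A₁ t * lam - A₂ t]

/-- Case 5 (implicit boundary conditions I): under the indicated algebraic-differential
constraints on the boundary fields `A₁, A₂, B₂` and the implicit boundary condition
`2uA₁ + 2iB₂ + ip = 0`, the matrix `𝓛(t;λ)` satisfies the Sklyanin constraint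
`∂ₜ𝓛 = V(t;−λ)𝓛 − 𝓛V(t;λ)`. -/
theorem implicit_boundary_I (β₁ : ℂ) (u p : ℝ → ℂ) (A₁ A₂ B₂ : ℝ → ℂ)
    (hA₁diff : Differentiable ℝ A₁) (hA₂diff : Differentiable ℝ A₂)
    (hB₂diff : Differentiable ℝ B₂)
    (hA₁im : ∀ t : ℝ, starRingEnd ℂ (A₁ t) = -A₁ t)
    (hA₂re : ∀ t : ℝ, starRingEnd ℂ (A₂ t) = A₂ t)
    (hA₁ne : ∀ t : ℝ, A₁ t ≠ 0) (hA₂ne : ∀ t : ℝ, A₂ t ≠ 0)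
    (halg1 : ∀ t : ℝ, A₁ t ^ 2 - 2 * A₂ t = β₁ ^ 2 + (starRingEnd ℂ β₁) ^ 2)
    (halg2 : ∀ t : ℝ, A₂ t ^ 2 + (‖B₂ t‖ : ℂ) ^ 2
      = (‖β₁‖ : ℂ) ^ 4)
    (hdiff : ∀ t : ℝ, deriv B₂ t
      = 2 * Complex.I * (‖u t‖ : ℂ) ^ 2 * B₂ t
        - 2 * Complex.I * p t * A₂ t)
    (hbc : ∀ t : ℝ, 2 * u t * A₁ t + 2 * Complex.I * B₂ t + Complex.I * p t = 0) :
    ∀ (lam : ℂ) (t : ℝ),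
      (Matrix.of fun i j => deriv (fun s => L5 A₁ A₂ B₂ s lam i j) t)
        = Vt u p t (-lam) * L5 A₁ A₂ B₂ t lam - L5 A₁ A₂ B₂ t lam * Vt u p t lam := by
  intro lam t
  have hA1t := (hA₁diff t).hasDerivAt
  have hA2t := (hA₂diff t).hasDerivAt
  have hBt := (hB₂diff t).hasDerivAt
  have hBct : HasDerivAt (fun s => (starRingEnd ℂ) (B₂ s)) ((starRingEnd ℂ) (deriv B₂ t)) t := by
    simpa using hBt.star
  have habs : ∀ z : ℂ, ((‖z‖ : ℂ))^2 = z * (starRingEnd ℂ) z := fun z => by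
    rw [← Complex.ofReal_pow, Complex.sq_norm, Complex.mul_conj]
  have hdiff' : deriv B₂ t = 2 * Complex.I * (u t * (starRingEnd ℂ) (u t)) * B₂ t
      - 2 * Complex.I * p t * A₂ t := by
    rw [hdiff t, habs (u t)]
  have hconjdB : (starRingEnd ℂ) (deriv B₂ t)
      = -(2 * Complex.I) * (u t * (starRingEnd ℂ) (u t)) * (starRingEnd ℂ) (B₂ t)
        + 2 * Complex.I * (starRingEnd ℂ) (p t) * A₂ t := by
    rw [hdiff']
    simp only [map_sub, map_add, _root_.map_mul, map_neg, map_ofNat, Complex.conj_I,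
      Complex.conj_conj, hA₂re]
    ring
  have hbcc : -(2 * (starRingEnd ℂ) (u t) * A₁ t) - 2 * Complex.I * (starRingEnd ℂ) (B₂ t)
      - Complex.I * (starRingEnd ℂ) (p t) = 0 := by
    have h := congrArg (starRingEnd ℂ) (hbc t)
    simp only [map_add, _root_.map_mul, map_ofNat, Complex.conj_I, hA₁im, map_zero] at h
    linear_combination h
  have eq2 : 2 * A₂ t * deriv A₂ t
      + (deriv B₂ t * (starRingEnd ℂ) (B₂ t) + B₂ t * (starRingEnd ℂ) (deriv B₂ t)) = 0 := by
    have hg : HasDerivAt (fun s => A₂ s * A₂ s + B₂ s * (starRingEnd ℂ) (B₂ s))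
        (deriv A₂ t * A₂ t + A₂ t * deriv A₂ t
          + (deriv B₂ t * (starRingEnd ℂ) (B₂ t) + B₂ t * (starRingEnd ℂ) (deriv B₂ t))) t :=
      (hA2t.mul hA2t).add (hBt.mul hBct)
    have hgc : HasDerivAt (fun s => A₂ s * A₂ s + B₂ s * (starRingEnd ℂ) (B₂ s)) (0 : ℂ) t := by
      have hfun : (fun s => A₂ s * A₂ s + B₂ s * (starRingEnd ℂ) (B₂ s))
          = fun _ => ((‖β₁‖ : ℂ)) ^ 4 := by
        funext s
        rw [← halg2 s, habs (B₂ s)]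
        ring
      rw [hfun]
      exact hasDerivAt_const t _
    have heq := hg.unique hgc
    linear_combination heq
  have eq1 : A₁ t * deriv A₁ t = deriv A₂ t := by
    have hg : HasDerivAt (fun s => A₁ s * A₁ s - 2 * A₂ s)
        (deriv A₁ t * A₁ t + A₁ t * deriv A₁ t - 2 * deriv A₂ t) t :=
      (hA1t.mul hA1t).sub (hA2t.const_mul 2)
    have hgc : HasDerivAt (fun s => A₁ s * A₁ s - 2 * A₂ s) (0 : ℂ) t := by
      have hfun : (fun s => A₁ s * A₁ s - 2 * A₂ s)
          = fun _ => β₁ ^ 2 + (starRingEnd ℂ β₁) ^ 2 := by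
        funext s
        rw [← halg1 s]
        ring
      rw [hfun]
      exact hasDerivAt_const t _
    have heq := hg.unique hgc
    linear_combination heq / 2
  have hdA2 : deriv A₂ t
      = Complex.I * (p t * (starRingEnd ℂ) (B₂ t) - (starRingEnd ℂ) (p t) * B₂ t) := by
    apply mul_left_cancel₀ (hA₂ne t)
    linear_combination ((1:ℂ)/2) * eq2 - ((starRingEnd ℂ) (B₂ t) / 2) * hdiff'
      - (B₂ t / 2) * hconjdB
  have hdA1 : deriv A₁ t
      = -2 * (u t * (starRingEnd ℂ) (B₂ t) - (starRingEnd ℂ) (u t) * B₂ t) := by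
    apply mul_left_cancel₀ (hA₁ne t)
    linear_combination eq1 + hdA2 + ((starRingEnd ℂ) (B₂ t)) * hbc t + B₂ t * hbcc
  have d00 : HasDerivAt (fun s => lam ^ 2 + A₁ s * lam + A₂ s)
      (deriv A₁ t * lam + deriv A₂ t) t := by
    exact (((hasDerivAt_const t (lam ^ 2)).add (hA1t.mul_const lam)).add hA2t).congr_deriv (by ring)
  have d11 : HasDerivAt (fun s => -lam ^ 2 + A₁ s * lam - A₂ s)
      (deriv A₁ t * lam - deriv A₂ t) t := by
    exact (((hasDerivAt_const t (-lam ^ 2)).add (hA1t.mul_const lam)).sub hA2t).congr_deriv (by ring)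
  ext i j
  fin_cases i <;> fin_cases j <;>
    simp only [Matrix.of_apply, Fin.zero_eta, Fin.mk_one] <;>
    [(rw [show (fun s => L5 A₁ A₂ B₂ s lam 0 0) = fun s => lam ^ 2 + A₁ s * lam + A₂ s
        from rfl, d00.deriv]);
     (rw [show (fun s => L5 A₁ A₂ B₂ s lam 0 1) = fun s => B₂ s from rfl]);
     (rw [show (fun s => L5 A₁ A₂ B₂ s lam 1 0) = fun s => (starRingEnd ℂ) (B₂ s) from rfl,
        hBct.deriv]);
     (rw [show (fun s => L5 A₁ A₂ B₂ s lam 1 1) = fun s => -lam ^ 2 + A₁ s * lam - A₂ s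
        from rfl, d11.deriv])] <;>
  simp only [Vt, L5, σ3, Qb, Pb, Matrix.mul_apply, Fin.sum_univ_two, pow_two,
    Matrix.sub_apply, Matrix.add_apply, Matrix.smul_apply, Matrix.cons_val', Matrix.cons_val_zero,
    Matrix.cons_val_one, Matrix.head_cons, Matrix.head_fin_const, Matrix.empty_val',
    Matrix.cons_val_fin_one, smul_eq_mul, Matrix.of_apply]
  · linear_combination lam * hdA1 + hdA2
  · linear_combination hdiff' + 2 * lam ^ 2 * hbc t
  · linear_combination hconjdB + 2 * lam ^ 2 * hbcc
  · linear_combination lam * hdA1 - hdA2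
end
end

section
/- Let T⁺, T⁻ be invertible 2×2 complex matrices with conj(T⁺) = σ₂·T⁺·σ₂ and conj(T⁻) = σ₂·T⁻·σ₂ (entrywise conjugation), let κ⁺, κ⁻ ∈ ℂ with κ⁺·κ⁻ = 1 and conj(κ⁺) = κ⁻, and let K be a 2×2 complex matrix with κ⁺·K = σ₂·conj(K)·σ₂. Define Γ = T⁺·K·(T⁻)⁻¹·!![1, 0; 0, κ⁺]. Then σ₂·conj(Γ)·σ₂ = Γ; in particular Γ₂₂ = conj(Γ₁₁) and Γ₁₂ = −conj(Γ₂₁), so Γ has the form !![A, −conj(B); B, conj(A)] for some A, B ∈ ℂ. -/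
open Matrix

noncomputable section

lemma σ2_sq : σ2 * σ2 = 1 := by
  ext i j
  fin_cases i <;> fin_cases j <;>
    simp [σ2, Matrix.mul_apply, Fin.sum_univ_two, Complex.I_mul_I] <;> ring_nf <;>
    simp [Complex.I_sq]

lemma sandwich00 (M : Matrix (Fin 2) (Fin 2) ℂ) : (σ2 * M * σ2) 0 0 = M 1 1 := by
  simp [σ2, Matrix.mul_apply, Fin.sum_univ_two, Matrix.vecMul, dotProduct]; ring_nf
  simp [Complex.I_sq]

lemma sandwich01 (M : Matrix (Fin 2) (Fin 2) ℂ) : (σ2 * M * σ2) 0 1 = -M 1 0 := by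
  simp [σ2, Matrix.mul_apply, Fin.sum_univ_two, Matrix.vecMul, dotProduct]; ring_nf
  simp [Complex.I_sq]

/-- For real λ, the double-row monodromy matrix
`Γ = T(λ) K₋(−λ) T(−λ)⁻¹ K₊(λ)` (with `K₊(λ) = diag(1, κ(λ))`) inherits the involution
`σ₂ conj(Γ) σ₂ = Γ`, hence has the structure `Γ = !![A, −conj B; B, conj A]`. -/
theorem double_row_structure
    (Tp Tm : Matrix (Fin 2) (Fin 2) ℂ) (hTp : IsUnit Tp) (hTm : IsUnit Tm)
    (hTpc : Tp.map (starRingEnd ℂ) = σ2 * Tp * σ2)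
    (hTmc : Tm.map (starRingEnd ℂ) = σ2 * Tm * σ2)
    (κp κm : ℂ) (hκ : κp * κm = 1) (hκc : starRingEnd ℂ κp = κm)
    (K : Matrix (Fin 2) (Fin 2) ℂ)
    (hK : κp • K = σ2 * K.map (starRingEnd ℂ) * σ2) :
    σ2 * (Tp * K * Tm⁻¹ * !![1, 0; 0, κp]).map (starRingEnd ℂ) * σ2
        = Tp * K * Tm⁻¹ * !![1, 0; 0, κp] ∧
    (Tp * K * Tm⁻¹ * !![1, 0; 0, κp]) 1 1
        = starRingEnd ℂ ((Tp * K * Tm⁻¹ * !![1, 0; 0, κp]) 0 0) ∧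
    (Tp * K * Tm⁻¹ * !![1, 0; 0, κp]) 0 1
        = -starRingEnd ℂ ((Tp * K * Tm⁻¹ * !![1, 0; 0, κp]) 1 0) ∧
    ∃ A B : ℂ, Tp * K * Tm⁻¹ * !![1, 0; 0, κp]
        = !![A, -starRingEnd ℂ B; B, starRingEnd ℂ A] := by
  set c := starRingEnd ℂ with hc
  have hKc : K.map c = κp • (σ2 * K * σ2) := by
    calc K.map c = (σ2 * σ2) * K.map c * (σ2 * σ2) := by rw [σ2_sq]; simp
    _ = σ2 * (σ2 * K.map c * σ2) * σ2 := by noncomm_ring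
    _ = σ2 * (κp • K) * σ2 := by rw [← hK]
    _ = κp • (σ2 * K * σ2) := by rw [Matrix.mul_smul, Matrix.smul_mul]
  have hTmu : Tm * Tm⁻¹ = 1 := Matrix.mul_nonsing_inv Tm
    (by simpa using hTm.map (Matrix.detMonoidHom))
  have hσinv : σ2⁻¹ = σ2 := Matrix.inv_eq_right_inv σ2_sq
  have hTmic : (Tm⁻¹).map c = σ2 * Tm⁻¹ * σ2 := by
    have h1 : (Tm.map c)⁻¹ = (Tm⁻¹).map c := by
      apply Matrix.inv_eq_right_inv
      rw [← Matrix.map_mul, hTmu]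
      simp
    rw [← h1, hTmc, Matrix.mul_inv_rev, Matrix.mul_inv_rev, hσinv]
    noncomm_ring
  have hDc : (!![1, 0; 0, κp] : Matrix (Fin 2) (Fin 2) ℂ).map c = !![1, 0; 0, κm] := by
    ext i j
    fin_cases i <;> fin_cases j <;> simp [hc, ← hκc]
  have hDs : σ2 * (!![1, 0; 0, κm] : Matrix (Fin 2) (Fin 2) ℂ) * σ2 = !![κm, 0; 0, 1] := by
    ext i j
    fin_cases i <;> fin_cases j <;>
      simp [σ2, Matrix.mul_apply, Fin.sum_univ_two] <;> ring_nf <;> simp [Complex.I_sq]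
  have hDk : κp • (!![κm, 0; 0, 1] : Matrix (Fin 2) (Fin 2) ℂ) = !![1, 0; 0, κp] := by
    ext i j
    fin_cases i <;> fin_cases j <;> simp [hκ]
  have main : σ2 * (Tp * K * Tm⁻¹ * !![1, 0; 0, κp]).map c * σ2
      = Tp * K * Tm⁻¹ * !![1, 0; 0, κp] := by
    rw [Matrix.map_mul, Matrix.map_mul, Matrix.map_mul, hTpc, hKc, hTmic, hDc]
    simp only [Matrix.mul_smul, Matrix.smul_mul]
    rw [← hDk, Matrix.mul_smul]
    congr 1
    calc σ2 * (σ2 * Tp * σ2 * (σ2 * K * σ2) * (σ2 * Tm⁻¹ * σ2) * !![1, 0; 0, κm]) * σ2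
        = (σ2 * σ2) * Tp * (σ2 * σ2) * K * (σ2 * σ2) * Tm⁻¹ *
            (σ2 * !![1, 0; 0, κm] * σ2) := by noncomm_ring
      _ = Tp * K * Tm⁻¹ * !![κm, 0; 0, 1] := by rw [σ2_sq, hDs]; noncomm_ring
  refine ⟨main, ?_, ?_, ?_⟩
  · have := congrFun (congrFun main 0) 0
    rw [sandwich00] at this
    have h2 : c ((Tp * K * Tm⁻¹ * !![1, 0; 0, κp]) 1 1)
        = (Tp * K * Tm⁻¹ * !![1, 0; 0, κp]) 0 0 := by
      simpa [Matrix.map_apply] using this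
    rw [← h2]
    simp [hc]
  · have := congrFun (congrFun main 0) 1
    rw [sandwich01] at this
    have h2 : -c ((Tp * K * Tm⁻¹ * !![1, 0; 0, κp]) 1 0)
        = (Tp * K * Tm⁻¹ * !![1, 0; 0, κp]) 0 1 := by
      simpa [Matrix.map_apply] using this
    rw [← h2]
  · refine ⟨(Tp * K * Tm⁻¹ * !![1, 0; 0, κp]) 0 0, (Tp * K * Tm⁻¹ * !![1, 0; 0, κp]) 1 0, ?_⟩
    have h11 : (Tp * K * Tm⁻¹ * !![1, 0; 0, κp]) 1 1
        = c ((Tp * K * Tm⁻¹ * !![1, 0; 0, κp]) 0 0) := by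
      have := congrFun (congrFun main 0) 0
      rw [sandwich00] at this
      have h2 : c ((Tp * K * Tm⁻¹ * !![1, 0; 0, κp]) 1 1)
          = (Tp * K * Tm⁻¹ * !![1, 0; 0, κp]) 0 0 := by
        simpa [Matrix.map_apply] using this
      rw [← h2]; simp [hc]
    have h01 : (Tp * K * Tm⁻¹ * !![1, 0; 0, κp]) 0 1
        = -c ((Tp * K * Tm⁻¹ * !![1, 0; 0, κp]) 1 0) := by
      have := congrFun (congrFun main 0) 1
      rw [sandwich01] at this
      have h2 : -c ((Tp * K * Tm⁻¹ * !![1, 0; 0, κp]) 1 0)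
          = (Tp * K * Tm⁻¹ * !![1, 0; 0, κp]) 0 1 := by
        simpa [Matrix.map_apply] using this
      rw [← h2]
    rw [← Matrix.etaExpand_eq (Tp * K * Tm⁻¹ * !![1, 0; 0, κp])]
    rw [Matrix.etaExpand_eq]
    conv_lhs => rw [Matrix.eta_fin_two (Tp * K * Tm⁻¹ * !![1, 0; 0, κp])]
    rw [h11, h01]
end
end
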